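/- arXiv:2401.16897 — 5 statements merged into one kernel-verified Lean document; each statement's English description precedes it below -/
import Mathlib

section
/- With the vector potential A = (-b y, 0, 0) on ℝ³ (constant magnetic field b along z), the nonpolynomial function H₅ = −Π_x cos(b z / Π_z) − Π_y sin(b z / Π_z), defined on the open set where Π_z ≠ 0, Poisson-commutes with the Hamiltonian H = (1/2)(Π_x² + Π_y² + Π_z²), and moreover {H₅, H₁} = 0 and {H₅, H₂} = 0 where H₁ = Π_x + b y and H₂ = Π_y − b x. -/
noncomputable section

/-- Partial derivative of a function on phase space ℝ⁶ in direction of the `i`-th coordinate. -/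
def pd (F : (Fin 6 → ℝ) → ℝ) (i : Fin 6) (v : Fin 6 → ℝ) : ℝ :=
  fderiv ℝ F v (Pi.single i 1)

/-- Canonical Poisson bracket on ℝ⁶ with coordinates (x,y,z,p_x,p_y,p_z). -/
def pb (F G : (Fin 6 → ℝ) → ℝ) (v : Fin 6 → ℝ) : ℝ :=
  ∑ k : Fin 3, (pd F ⟨k.1, by omega⟩ v * pd G ⟨k.1 + 3, by omega⟩ v -
    pd F ⟨k.1 + 3, by omega⟩ v * pd G ⟨k.1, by omega⟩ v)

/-!
Under the flow of `H` one has `Π̇_x = -b Π_y`, `Π̇_y = b Π_x` and `ż = Π_z` with `Π_z` conserved: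
the transverse kinetic momentum `(Π_x, Π_y)` and the unit vector `(cos θ, sin θ)`, `θ = b z / Π_z`,
both rotate with angular velocity `b`, so their inner product `-H₅` is conserved. The flows of
`H₁ = p_x` and `H₂ = p_y - b x` are the magnetic translations `x ↦ x + t` and
`(y, p_x) ↦ (y + t, p_x + b t)`, which fix `Π_x`, `Π_y`, `z` and `p_z`, hence `H₅`.
-/

open Real

lemma pb_eq_pd (F G : (Fin 6 → ℝ) → ℝ) (v : Fin 6 → ℝ) :
    pb F G v = pd F 0 v * pd G 3 v - pd F 3 v * pd G 0 v
      + (pd F 1 v * pd G 4 v - pd F 4 v * pd G 1 v)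
      + (pd F 2 v * pd G 5 v - pd F 5 v * pd G 2 v) := by
  simp only [pb, Fin.sum_univ_three]
  rfl

lemma pd_eq_of_hasFDerivAt {F : (Fin 6 → ℝ) → ℝ} {F' : (Fin 6 → ℝ) →L[ℝ] ℝ} {v : Fin 6 → ℝ}
    (h : HasFDerivAt F F' v) (i : Fin 6) : pd F i v = F' (Pi.single i 1) := by
  rw [pd, h.fderiv]

namespace ConstantField

variable (b : ℝ) {v : Fin 6 → ℝ}

def hamiltonian : (Fin 6 → ℝ) → ℝ := fun v => (1/2) * ((v 3 - b * v 1)^2 + (v 4)^2 + (v 5)^2)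

def integralH₁ : (Fin 6 → ℝ) → ℝ := fun v => v 3

def integralH₂ : (Fin 6 → ℝ) → ℝ := fun v => v 4 - b * v 0

def integralH₅ : (Fin 6 → ℝ) → ℝ := fun v =>
  -(v 3 - b * v 1) * cos (b * v 2 / v 5) - v 4 * sin (b * v 2 / v 5)

lemma pd_hamiltonian (i : Fin 6) :
    pd (hamiltonian b) i v = ![0, -b * (v 3 - b * v 1), 0, v 3 - b * v 1, v 4, v 5] i := by
  have hx (j : Fin 6) : HasFDerivAt (fun w : Fin 6 → ℝ => w j) (ContinuousLinearMap.proj j) v :=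
    hasFDerivAt_apply (𝕜 := ℝ) j v
  have hPx := (hx 3).sub ((hx 1).const_mul b)
  rw [pd_eq_of_hasFDerivAt (F := hamiltonian b)
    ((((hPx.pow 2).add ((hx 4).pow 2)).add ((hx 5).pow 2)).const_mul (1 / 2))]
  fin_cases i <;> simp
  ring

lemma pd_integralH₁ (i : Fin 6) : pd integralH₁ i v = ![0, 0, 0, 1, 0, 0] i := by
  rw [pd_eq_of_hasFDerivAt (F := integralH₁) (hasFDerivAt_apply 3 v)]
  fin_cases i <;> simp

lemma pd_integralH₂ (i : Fin 6) : pd (integralH₂ b) i v = ![-b, 0, 0, 0, 1, 0] i := by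
  rw [pd_eq_of_hasFDerivAt (F := integralH₂ b)
    ((hasFDerivAt_apply 4 v).sub ((hasFDerivAt_apply 0 v).const_mul b))]
  fin_cases i <;> simp

lemma pd_integralH₅ (hv : v 5 ≠ 0) (i : Fin 6) :
    pd (integralH₅ b) i v =
      ![0, b * cos (b * v 2 / v 5),
        b / v 5 * ((v 3 - b * v 1) * sin (b * v 2 / v 5) - v 4 * cos (b * v 2 / v 5)),
        -cos (b * v 2 / v 5), -sin (b * v 2 / v 5),
        -(b * v 2 / v 5 ^ 2) *
          ((v 3 - b * v 1) * sin (b * v 2 / v 5) - v 4 * cos (b * v 2 / v 5))] i := by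
  have hx (j : Fin 6) : HasFDerivAt (fun w : Fin 6 → ℝ => w j) (ContinuousLinearMap.proj j) v :=
    hasFDerivAt_apply (𝕜 := ℝ) j v
  have hθ := ((hx 2).const_mul b).mul ((hasDerivAt_inv hv).comp_hasFDerivAt v (hx 5))
  have hPx := (hx 3).sub ((hx 1).const_mul b)
  rw [pd_eq_of_hasFDerivAt (F := integralH₅ b) ((hPx.neg.mul hθ.cos).sub ((hx 4).mul hθ.sin))]
  fin_cases i <;> simp <;> field_simp <;> ring

lemma pb_integralH₅_hamiltonian (hv : v 5 ≠ 0) : pb (integralH₅ b) (hamiltonian b) v = 0 := by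
  simp only [pb_eq_pd, pd_integralH₅ b hv, pd_hamiltonian, Matrix.cons_val]
  field_simp
  ring

lemma pb_integralH₅_integralH₁ (hv : v 5 ≠ 0) : pb (integralH₅ b) integralH₁ v = 0 := by
  simp [pb_eq_pd, pd_integralH₅ b hv, pd_integralH₁]

lemma pb_integralH₅_integralH₂ (hv : v 5 ≠ 0) : pb (integralH₅ b) (integralH₂ b) v = 0 := by
  simp only [pb_eq_pd, pd_integralH₅ b hv, pd_integralH₂, Matrix.cons_val]
  ring

end ConstantField

/-- Constant magnetic field b along z, gauge A = (−b y, 0, 0).  On the open set {p_z ≠ 0},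
the nonpolynomial integral H₅ = −Π_x cos(b z/Π_z) − Π_y sin(b z/Π_z) Poisson-commutes with
H = (1/2)(Π_x² + Π_y² + Π_z²), and also with H₁ = Π_x + b y and H₂ = Π_y − b x. -/
theorem nonpolynomial_integral_constant_field (b : ℝ)
    (H H₁ H₂ H₅ : (Fin 6 → ℝ) → ℝ)
    (hH : H = fun v => (1/2) * ((v 3 - b * v 1)^2 + (v 4)^2 + (v 5)^2))
    (hH₁ : H₁ = fun v => v 3)
    (hH₂ : H₂ = fun v => v 4 - b * v 0)
    (hH₅ : H₅ = fun v => -(v 3 - b * v 1) * Real.cos (b * v 2 / v 5)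
      - v 4 * Real.sin (b * v 2 / v 5)) :
    ∀ v : Fin 6 → ℝ, v 5 ≠ 0 →
      pb H₅ H v = 0 ∧ pb H₅ H₁ v = 0 ∧ pb H₅ H₂ v = 0 := by
  subst hH hH₁ hH₂ hH₅
  intro v hv
  exact ⟨ConstantField.pb_integralH₅_hamiltonian b hv,
    ConstantField.pb_integralH₅_integralH₁ b hv, ConstantField.pb_integralH₅_integralH₂ b hv⟩
end
end

section
/- For Case 2 of cylindrical separation, the three functions H = (1/2)(p_r² + p_φ²/r² + p_z²) + ((f₂(r) + r² f₃(z))/r²) p_φ + f₅(r) + f₄(z) − (r² f₃(z)²)/2 − f₂(r) f₃(z) + (1/2)(f₂(r) + r² f₃(z))²/r², H₂ = p_φ, and H₃ = (1/2)p_z² + f₃(z) p_φ + f₄(z) pairwise Poisson-commute, for arbitrary smooth functions f₂, f₃, f₄, f₅. -/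
noncomputable section

lemma pd_line (F : (Fin 6 → ℝ) → ℝ) (i : Fin 6) (v : Fin 6 → ℝ)
    (hF : DifferentiableAt ℝ F v) :
    pd F i v = deriv (fun t : ℝ => F (v + t • (Pi.single i 1 : Fin 6 → ℝ))) 0 := by
  have h : HasDerivAt (fun t : ℝ => v + t • (Pi.single i 1 : Fin 6 → ℝ))
      (Pi.single i 1) 0 := by
    simpa using ((hasDerivAt_id (0:ℝ)).smul_const (Pi.single i 1 : Fin 6 → ℝ)).const_add v
  have hv : v + (0:ℝ) • (Pi.single i 1 : Fin 6 → ℝ) = v := by simp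
  have hF' : HasFDerivAt F (fderiv ℝ F v) (v + (0:ℝ) • (Pi.single i 1 : Fin 6 → ℝ)) := by
    rw [hv]; exact hF.hasFDerivAt
  exact ((hF'.comp_hasDerivAt 0 h).deriv).symm

lemma pb_expand (F G : (Fin 6 → ℝ) → ℝ) (v : Fin 6 → ℝ) :
    pb F G v = (pd F 0 v * pd G 3 v - pd F 3 v * pd G 0 v)
      + (pd F 1 v * pd G 4 v - pd F 4 v * pd G 1 v)
      + (pd F 2 v * pd G 5 v - pd F 5 v * pd G 2 v) := by
  simp [pb, Fin.sum_univ_three]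
  ring

set_option maxHeartbeats 1000000 in
/-- Cylindrical Case 2: for arbitrary smooth f₂, f₃, f₄, f₅, the Hamiltonian H (with vector
potential A = (f₂(r) + r² f₃(z)) ∇φ and scalar potential V = f₅(r)+f₄(z)−r²f₃(z)²/2−f₂(r)f₃(z)),
H₂ = p_φ and H₃ = ½p_z² + f₃(z) p_φ + f₄(z) pairwise Poisson-commute on {r > 0}. -/
theorem cylindrical_case2_involution
    (f₂ f₃ f₄ f₅ : ℝ → ℝ)
    (hf₂ : ContDiff ℝ (⊤ : ℕ∞) f₂) (hf₃ : ContDiff ℝ (⊤ : ℕ∞) f₃)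
    (hf₄ : ContDiff ℝ (⊤ : ℕ∞) f₄) (hf₅ : ContDiff ℝ (⊤ : ℕ∞) f₅)
    (H H₂ H₃ : (Fin 6 → ℝ) → ℝ)
    (hH : H = fun v => (1/2) * ((v 3)^2 + (v 4)^2 / (v 0)^2 + (v 5)^2)
      + ((f₂ (v 0) + (v 0)^2 * f₃ (v 2)) / (v 0)^2) * v 4
      + f₅ (v 0) + f₄ (v 2) - (v 0)^2 * (f₃ (v 2))^2 / 2 - f₂ (v 0) * f₃ (v 2)
      + (1/2) * (f₂ (v 0) + (v 0)^2 * f₃ (v 2))^2 / (v 0)^2)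
    (hH₂ : H₂ = fun v => v 4)
    (hH₃ : H₃ = fun v => (1/2) * (v 5)^2 + f₃ (v 2) * v 4 + f₄ (v 2)) :
    ∀ v : Fin 6 → ℝ, v 0 > 0 →
      pb H H₂ v = 0 ∧ pb H H₃ v = 0 ∧ pb H₂ H₃ v = 0 := by
  intro v hv
  have d2 : Differentiable ℝ f₂ := hf₂.differentiable (by simp)
  have d3 : Differentiable ℝ f₃ := hf₃.differentiable (by simp)
  have d4 : Differentiable ℝ f₄ := hf₄.differentiable (by simp)
  have d5 : Differentiable ℝ f₅ := hf₅.differentiable (by simp)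
  have hr0 : v 0 ≠ 0 := ne_of_gt hv
  have hr : (v 0)^2 ≠ 0 := pow_ne_zero 2 hr0
  have hinv : DifferentiableAt ℝ (fun w : Fin 6 → ℝ => ((w 0)^2)⁻¹) v :=
    DifferentiableAt.inv (by fun_prop) hr
  have hHd : DifferentiableAt ℝ H v := by
    rw [hH]; simp only [div_eq_mul_inv]; fun_prop
  have hH₂d : DifferentiableAt ℝ H₂ v := by rw [hH₂]; fun_prop
  have hH₃d : DifferentiableAt ℝ H₃ v := by rw [hH₃]; fun_prop
  -- derivatives of f₃, f₄ along the z-line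
  have hd3 : HasDerivAt (fun t : ℝ => f₃ (v 2 + t)) (deriv f₃ (v 2)) 0 := by
    have h := ((d3 (v 2 + 0)).hasDerivAt.comp (0:ℝ)
      ((hasDerivAt_id (0:ℝ)).const_add (v 2)))
    simp only [add_zero, mul_one] at h
    exact h
  have hd4 : HasDerivAt (fun t : ℝ => f₄ (v 2 + t)) (deriv f₄ (v 2)) 0 := by
    have h := ((d4 (v 2 + 0)).hasDerivAt.comp (0:ℝ)
      ((hasDerivAt_id (0:ℝ)).const_add (v 2)))
    simp only [add_zero, mul_one] at h
    exact h
  -- pd of H₂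
  have pdH₂ : ∀ i : Fin 6, pd H₂ i v = (Pi.single i 1 : Fin 6 → ℝ) 4 := by
    intro i
    rw [pd_line _ _ _ hH₂d, hH₂]
    simp only [Pi.add_apply, Pi.smul_apply, smul_eq_mul]
    simpa using
      (((hasDerivAt_id (0:ℝ)).mul_const ((Pi.single i 1 : Fin 6 → ℝ) 4)).const_add (v 4)).deriv
  -- pd of H₃ : zero directions
  have pdH₃0 : pd H₃ 0 v = 0 := by
    have key : (fun t : ℝ => H₃ (v + t • (Pi.single (0:Fin 6) 1 : Fin 6 → ℝ))) =
        fun _ => H₃ v := by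
      funext t; rw [hH₃]; simp [Pi.single_apply]
    rw [pd_line _ _ _ hH₃d, key, deriv_const]
  have pdH₃1 : pd H₃ 1 v = 0 := by
    have key : (fun t : ℝ => H₃ (v + t • (Pi.single (1:Fin 6) 1 : Fin 6 → ℝ))) =
        fun _ => H₃ v := by
      funext t; rw [hH₃]; simp [Pi.single_apply]
    rw [pd_line _ _ _ hH₃d, key, deriv_const]
  have pdH₃3 : pd H₃ 3 v = 0 := by
    have key : (fun t : ℝ => H₃ (v + t • (Pi.single (3:Fin 6) 1 : Fin 6 → ℝ))) =
        fun _ => H₃ v := by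
      funext t; rw [hH₃]; simp [Pi.single_apply]
    rw [pd_line _ _ _ hH₃d, key, deriv_const]
  -- pd H₃ 2
  have pdH₃2 : pd H₃ 2 v = deriv f₃ (v 2) * v 4 + deriv f₄ (v 2) := by
    have key : (fun t : ℝ => H₃ (v + t • (Pi.single (2:Fin 6) 1 : Fin 6 → ℝ))) =
        fun t => (1/2) * (v 5)^2 + f₃ (v 2 + t) * v 4 + f₄ (v 2 + t) := by
      funext t; rw [hH₃]; simp [Pi.single_apply]
    rw [pd_line _ _ _ hH₃d, key]
    have h :=
      (((hasDerivAt_const (0:ℝ) ((1/2) * (v 5)^2)).add (hd3.mul_const (v 4))).add hd4).deriv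
    simp only [zero_add] at h
    exact h
  -- pd H₃ 5
  have pdH₃5 : pd H₃ 5 v = v 5 := by
    have key : (fun t : ℝ => H₃ (v + t • (Pi.single (5:Fin 6) 1 : Fin 6 → ℝ))) =
        fun t => (1/2) * (v 5 + t)^2 + f₃ (v 2) * v 4 + f₄ (v 2) := by
      funext t; rw [hH₃]; simp [Pi.single_apply]
    rw [pd_line _ _ _ hH₃d, key]
    have h := (((((hasDerivAt_id (0:ℝ)).const_add (v 5)).pow 2).const_mul
      ((1:ℝ)/2)).add_const (f₃ (v 2) * v 4)).add_const (f₄ (v 2))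
    simpa using h.deriv
  -- pd H 1
  have pdH1 : pd H 1 v = 0 := by
    have key : (fun t : ℝ => H (v + t • (Pi.single (1:Fin 6) 1 : Fin 6 → ℝ))) =
        fun _ => H v := by
      funext t; rw [hH]; simp [Pi.single_apply]
    rw [pd_line _ _ _ hHd, key, deriv_const]
  -- pd H 2
  have pdH2 : pd H 2 v = deriv f₃ (v 2) * v 4 + deriv f₄ (v 2) := by
    have key : (fun t : ℝ => H (v + t • (Pi.single (2:Fin 6) 1 : Fin 6 → ℝ))) =
        fun t => ((1/2) * ((v 3)^2 + (v 4)^2 / (v 0)^2 + (v 5)^2)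
          + (f₂ (v 0) * v 4 + f₂ (v 0)^2 / 2) / (v 0)^2 + f₅ (v 0))
          + f₃ (v 2 + t) * v 4 + f₄ (v 2 + t) := by
      funext t; rw [hH]; simp [Pi.single_apply]
      field_simp
      ring
    rw [pd_line _ _ _ hHd, key]
    have h :=
      (((hasDerivAt_const (0:ℝ) ((1/2) * ((v 3)^2 + (v 4)^2 / (v 0)^2 + (v 5)^2)
          + (f₂ (v 0) * v 4 + f₂ (v 0)^2 / 2) / (v 0)^2 + f₅ (v 0))).add
        (hd3.mul_const (v 4))).add hd4).deriv
    simp only [zero_add] at h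
    exact h
  -- pd H 5
  have pdH5 : pd H 5 v = v 5 := by
    have key : (fun t : ℝ => H (v + t • (Pi.single (5:Fin 6) 1 : Fin 6 → ℝ))) =
        fun t => (1/2) * (v 5 + t)^2 + ((1/2) * ((v 3)^2 + (v 4)^2 / (v 0)^2)
          + ((f₂ (v 0) + (v 0)^2 * f₃ (v 2)) / (v 0)^2) * v 4
          + f₅ (v 0) + f₄ (v 2) - (v 0)^2 * (f₃ (v 2))^2 / 2 - f₂ (v 0) * f₃ (v 2)
          + (1/2) * (f₂ (v 0) + (v 0)^2 * f₃ (v 2))^2 / (v 0)^2) := by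
      funext t; rw [hH]; simp [Pi.single_apply]
      ring
    rw [pd_line _ _ _ hHd, key]
    have h := ((((hasDerivAt_id (0:ℝ)).const_add (v 5)).pow 2).const_mul
      ((1:ℝ)/2)).add_const ((1/2) * ((v 3)^2 + (v 4)^2 / (v 0)^2)
          + ((f₂ (v 0) + (v 0)^2 * f₃ (v 2)) / (v 0)^2) * v 4
          + f₅ (v 0) + f₄ (v 2) - (v 0)^2 * (f₃ (v 2))^2 / 2 - f₂ (v 0) * f₃ (v 2)
          + (1/2) * (f₂ (v 0) + (v 0)^2 * f₃ (v 2))^2 / (v 0)^2)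
    simpa using h.deriv
  refine ⟨?_, ?_, ?_⟩
  · rw [pb_expand]
    simp [pdH₂, Pi.single_apply, pdH1]
  · rw [pb_expand]
    rw [pdH₃0, pdH₃1, pdH₃3, pdH₃2, pdH₃5, pdH1, pdH2, pdH5]
    ring
  · rw [pb_expand]
    simp [pdH₂, Pi.single_apply, pdH₃1]
end
end

section
/- For Case 3 of cylindrical separation, the three functions H = (1/2)(p_r² + p_φ²/r² + p_z²) + (f₁(r) + f₂(φ)/r²) p_z + f₃(r) − f₁(r) f₂(φ)/r² − f₂(φ)²/(2r⁴) + f₄(φ)/r² + (1/2)(f₁(r) + f₂(φ)/r²)², H₂ = (1/2)p_φ² + f₂(φ) p_z + f₄(φ), and H₃ = p_z pairwise Poisson-commute, for arbitrary smooth functions f₁, f₂, f₃, f₄. -/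
set_option maxHeartbeats 1000000

noncomputable section

/-- coordinate projection as a continuous linear map -/
abbrev pr (i : Fin 6) : (Fin 6 → ℝ) →L[ℝ] ℝ := ContinuousLinearMap.proj i

/-- Cylindrical Case 3: for arbitrary smooth f₁, f₂, f₃, f₄, the Hamiltonian H (with vector
potential A = (f₁(r) + f₂(φ)/r²) ∇z), H₂ = ½p_φ² + f₂(φ) p_z + f₄(φ) and H₃ = p_z
pairwise Poisson-commute on {r > 0}. -/
theorem cylindrical_case3_involution
    (f₁ f₂ f₃ f₄ : ℝ → ℝ)
    (hf₁ : ContDiff ℝ (⊤ : ℕ∞) f₁) (hf₂ : ContDiff ℝ (⊤ : ℕ∞) f₂)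
    (hf₃ : ContDiff ℝ (⊤ : ℕ∞) f₃) (hf₄ : ContDiff ℝ (⊤ : ℕ∞) f₄)
    (H H₂ H₃ : (Fin 6 → ℝ) → ℝ)
    (hH : H = fun v => (1/2) * ((v 3)^2 + (v 4)^2 / (v 0)^2 + (v 5)^2)
      + (f₁ (v 0) + f₂ (v 1) / (v 0)^2) * v 5
      + f₃ (v 0) - f₁ (v 0) * f₂ (v 1) / (v 0)^2 - (f₂ (v 1))^2 / (2 * (v 0)^4)
      + f₄ (v 1) / (v 0)^2
      + (1/2) * (f₁ (v 0) + f₂ (v 1) / (v 0)^2)^2)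
    (hH₂ : H₂ = fun v => (1/2) * (v 4)^2 + f₂ (v 1) * v 5 + f₄ (v 1))
    (hH₃ : H₃ = fun v => v 5) :
    ∀ v : Fin 6 → ℝ, v 0 > 0 →
      pb H H₂ v = 0 ∧ pb H H₃ v = 0 ∧ pb H₂ H₃ v = 0 := by
  subst hH hH₂ hH₃
  intro v hr
  have hr0 : v 0 ≠ 0 := hr.ne'
  -- coordinates
  have h0 : HasFDerivAt (fun w : Fin 6 → ℝ => w 0) (pr 0) v := (pr 0).hasFDerivAt
  have h1 : HasFDerivAt (fun w : Fin 6 → ℝ => w 1) (pr 1) v := (pr 1).hasFDerivAt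
  have h3 : HasFDerivAt (fun w : Fin 6 → ℝ => w 3) (pr 3) v := (pr 3).hasFDerivAt
  have h4 : HasFDerivAt (fun w : Fin 6 → ℝ => w 4) (pr 4) v := (pr 4).hasFDerivAt
  have h5 : HasFDerivAt (fun w : Fin 6 → ℝ => w 5) (pr 5) v := (pr 5).hasFDerivAt
  -- scalar pieces
  have hsq : HasDerivAt (fun t : ℝ => t * t) (1 * v 0 + v 0 * 1) (v 0) :=
    (hasDerivAt_id' (x := v 0)).mul (hasDerivAt_id' (x := v 0))
  have hginv : HasDerivAt (fun t : ℝ => (t * t)⁻¹)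
      (-(1 * v 0 + v 0 * 1) / (v 0 * v 0) ^ 2) (v 0) :=
    hsq.inv (mul_ne_zero hr0 hr0)
  have hG0 : HasFDerivAt (fun w : Fin 6 → ℝ => (w 0 * w 0)⁻¹)
      ((-(1 * v 0 + v 0 * 1) / (v 0 * v 0) ^ 2) • pr 0) v :=
    by have := hginv.comp_hasFDerivAt v h0; exact this
  have hf1 : HasFDerivAt (fun w : Fin 6 → ℝ => f₁ (w 0)) (deriv f₁ (v 0) • pr 0) v :=
    ((hf₁.differentiable (by simp)) (v 0)).hasDerivAt.comp_hasFDerivAt v h0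
  have hf2 : HasFDerivAt (fun w : Fin 6 → ℝ => f₂ (w 1)) (deriv f₂ (v 1) • pr 1) v :=
    ((hf₂.differentiable (by simp)) (v 1)).hasDerivAt.comp_hasFDerivAt v h1
  have hf3 : HasFDerivAt (fun w : Fin 6 → ℝ => f₃ (w 0)) (deriv f₃ (v 0) • pr 0) v :=
    ((hf₃.differentiable (by simp)) (v 0)).hasDerivAt.comp_hasFDerivAt v h0
  have hf4 : HasFDerivAt (fun w : Fin 6 → ℝ => f₄ (w 1)) (deriv f₄ (v 1) • pr 1) v :=
    ((hf₄.differentiable (by simp)) (v 1)).hasDerivAt.comp_hasFDerivAt v h1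
  -- derivative of the simplified Hamiltonian G
  have hGder : HasFDerivAt (fun w : Fin 6 → ℝ =>
      (1/2) * (w 3 * w 3) + (1/2) * (w 4 * w 4 * (w 0 * w 0)⁻¹) + (1/2) * (w 5 * w 5)
      + f₁ (w 0) * w 5 + f₂ (w 1) * (w 5 * (w 0 * w 0)⁻¹) + f₃ (w 0)
      + f₄ (w 1) * (w 0 * w 0)⁻¹ + (1/2) * (f₁ (w 0) * f₁ (w 0))) _ v :=
    ((((((((h3.mul h3).const_mul (1/2 : ℝ)).add
      (((h4.mul h4).mul hG0).const_mul (1/2 : ℝ))).add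
      ((h5.mul h5).const_mul (1/2 : ℝ))).add
      (hf1.mul h5)).add
      (hf2.mul (h5.mul hG0))).add
      hf3).add
      (hf4.mul hG0)).add
      ((hf1.mul hf1).const_mul (1/2 : ℝ))
  -- H agrees with G in a neighbourhood of v
  have hmem : ∀ᶠ w in nhds v, w 0 ≠ 0 :=
    ((continuous_apply (0 : Fin 6)).continuousAt (x := v)).eventually_ne hr0
  have key : fderiv ℝ (fun w : Fin 6 → ℝ => (1/2) * ((w 3)^2 + (w 4)^2 / (w 0)^2 + (w 5)^2)
      + (f₁ (w 0) + f₂ (w 1) / (w 0)^2) * w 5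
      + f₃ (w 0) - f₁ (w 0) * f₂ (w 1) / (w 0)^2 - (f₂ (w 1))^2 / (2 * (w 0)^4)
      + f₄ (w 1) / (w 0)^2
      + (1/2) * (f₁ (w 0) + f₂ (w 1) / (w 0)^2)^2) v
      = fderiv ℝ (fun w : Fin 6 → ℝ =>
      (1/2) * (w 3 * w 3) + (1/2) * (w 4 * w 4 * (w 0 * w 0)⁻¹) + (1/2) * (w 5 * w 5)
      + f₁ (w 0) * w 5 + f₂ (w 1) * (w 5 * (w 0 * w 0)⁻¹) + f₃ (w 0)
      + f₄ (w 1) * (w 0 * w 0)⁻¹ + (1/2) * (f₁ (w 0) * f₁ (w 0))) v := by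
    apply Filter.EventuallyEq.fderiv_eq
    filter_upwards [hmem] with w hw
    field_simp
    ring
  -- derivatives of H₂ and H₃
  have hfun2 : (fun w : Fin 6 → ℝ => (1/2) * (w 4)^2 + f₂ (w 1) * w 5 + f₄ (w 1))
      = (fun w : Fin 6 → ℝ => (1/2) * (w 4 * w 4) + f₂ (w 1) * w 5 + f₄ (w 1)) := by
    funext w; ring
  have hH2der : HasFDerivAt (fun w : Fin 6 → ℝ =>
      (1/2) * (w 4 * w 4) + f₂ (w 1) * w 5 + f₄ (w 1)) _ v :=
    (((h4.mul h4).const_mul (1/2 : ℝ)).add (hf2.mul h5)).add hf4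
  have hH3der : HasFDerivAt (fun w : Fin 6 → ℝ => w 5) (pr 5) v := (pr 5).hasFDerivAt
  refine ⟨?_, ?_, ?_⟩
  · simp only [pb, Fin.sum_univ_three, pd, hfun2]
    rw [key, hGder.fderiv, hH2der.fderiv]
    simp only [ContinuousLinearMap.add_apply, ContinuousLinearMap.smul_apply,
      ContinuousLinearMap.proj_apply, smul_eq_mul, Pi.single_apply, Fin.ext_iff]
    norm_num [show ((0:Fin 6):ℕ) = 0 from rfl, show ((1:Fin 6):ℕ) = 1 from rfl, show ((2:Fin 6):ℕ) = 2 from rfl, show ((3:Fin 6):ℕ) = 3 from rfl, show ((4:Fin 6):ℕ) = 4 from rfl, show ((5:Fin 6):ℕ) = 5 from rfl]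
    field_simp
    ring
  · simp only [pb, Fin.sum_univ_three, pd]
    rw [key, hGder.fderiv, hH3der.fderiv]
    simp only [ContinuousLinearMap.add_apply, ContinuousLinearMap.smul_apply,
      ContinuousLinearMap.proj_apply, smul_eq_mul, Pi.single_apply, Fin.ext_iff]
    norm_num [show ((0:Fin 6):ℕ) = 0 from rfl, show ((1:Fin 6):ℕ) = 1 from rfl, show ((2:Fin 6):ℕ) = 2 from rfl, show ((3:Fin 6):ℕ) = 3 from rfl, show ((4:Fin 6):ℕ) = 4 from rfl, show ((5:Fin 6):ℕ) = 5 from rfl]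
  · simp only [pb, Fin.sum_univ_three, pd, hfun2]
    rw [hH2der.fderiv, hH3der.fderiv]
    simp only [ContinuousLinearMap.add_apply, ContinuousLinearMap.smul_apply,
      ContinuousLinearMap.proj_apply, smul_eq_mul, Pi.single_apply, Fin.ext_iff]
    norm_num [show ((0:Fin 6):ℕ) = 0 from rfl, show ((1:Fin 6):ℕ) = 1 from rfl, show ((2:Fin 6):ℕ) = 2 from rfl, show ((3:Fin 6):ℕ) = 3 from rfl, show ((4:Fin 6):ℕ) = 4 from rfl, show ((5:Fin 6):ℕ) = 5 from rfl]
end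
end

section
/- For any smooth (1,1)-tensor field K that is a pointwise multiple of a projection onto a coordinate plane, specifically K = f(q,p) (∂/∂q^a ⊗ dq^a + ∂/∂p_a ⊗ dp_a) on ℝ^{2n} for a fixed index a and smooth nonvanishing f, the Haantjes torsion H_K vanishes identically. -/
noncomputable section

/-- Lie bracket of vector fields on ℝ^m: [X,Y] = DY·X − DX·Y. -/
def lieB {m : ℕ} (X Y : (Fin m → ℝ) → (Fin m → ℝ)) : (Fin m → ℝ) → (Fin m → ℝ) :=
  fun x => fderiv ℝ Y x (X x) - fderiv ℝ X x (Y x)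

/-- Nijenhuis torsion of a (1,1)-tensor K (given as an operator on vector fields):
τ_K(X,Y) = K²[X,Y] + [KX,KY] − K([X,KY] + [KX,Y]). -/
def nijT {m : ℕ} (K : ((Fin m → ℝ) → (Fin m → ℝ)) → ((Fin m → ℝ) → (Fin m → ℝ)))
    (X Y : (Fin m → ℝ) → (Fin m → ℝ)) : (Fin m → ℝ) → (Fin m → ℝ) :=
  fun x => K (K (lieB X Y)) x + lieB (K X) (K Y) x
    - K (fun z => lieB X (K Y) z + lieB (K X) Y z) x

/-- Haantjes torsion: H_K(X,Y) = K²τ_K(X,Y) + τ_K(KX,KY) − K(τ_K(X,KY) + τ_K(KX,Y)). -/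
def haanT {m : ℕ} (K : ((Fin m → ℝ) → (Fin m → ℝ)) → ((Fin m → ℝ) → (Fin m → ℝ)))
    (X Y : (Fin m → ℝ) → (Fin m → ℝ)) : (Fin m → ℝ) → (Fin m → ℝ) :=
  fun x => K (K (nijT K X Y)) x + nijT K (K X) (K Y) x
    - K (fun z => nijT K X (K Y) z + nijT K (K X) Y z) x

/-- The tensor K = f(q,p)(∂/∂q^a ⊗ dq^a + ∂/∂p_a ⊗ dp_a) on ℝ^{2n}: it multiplies the
a-th coordinate and momentum components by f and annihilates all the others. -/
def Kproj {n : ℕ} (f : (Fin (n + n) → ℝ) → ℝ) (a : Fin n)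
    (X : (Fin (n + n) → ℝ) → (Fin (n + n) → ℝ)) : (Fin (n + n) → ℝ) → (Fin (n + n) → ℝ) :=
  fun x i => if i = Fin.castAdd n a ∨ i = Fin.natAdd n a then f x * X x i else 0

/-- The constant projection onto the two distinguished coordinates. -/
def Pm (n : ℕ) (a : Fin n) : (Fin (n + n) → ℝ) →L[ℝ] (Fin (n + n) → ℝ) :=
  ContinuousLinearMap.pi fun i =>
    if i = Fin.castAdd n a ∨ i = Fin.natAdd n a then ContinuousLinearMap.proj i else 0

lemma Pm_apply {n : ℕ} (a : Fin n) (w : Fin (n + n) → ℝ) (i : Fin (n + n)) :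
    Pm n a w i = if i = Fin.castAdd n a ∨ i = Fin.natAdd n a then w i else 0 := by
  rw [Pm, ContinuousLinearMap.pi_apply]
  split <;> simp

lemma Pm_Pm {n : ℕ} (a : Fin n) (w : Fin (n + n) → ℝ) : Pm n a (Pm n a w) = Pm n a w := by
  funext i
  simp only [Pm_apply]
  split <;> simp_all

lemma Kproj_apply {n : ℕ} (f : (Fin (n + n) → ℝ) → ℝ) (a : Fin n)
    (X : (Fin (n + n) → ℝ) → (Fin (n + n) → ℝ)) (x : Fin (n + n) → ℝ) :
    Kproj f a X x = f x • Pm n a (X x) := by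
  funext i
  simp [Kproj, Pm_apply, mul_ite, mul_zero]

lemma Kproj_eq {n : ℕ} (f : (Fin (n + n) → ℝ) → ℝ) (a : Fin n)
    (X : (Fin (n + n) → ℝ) → (Fin (n + n) → ℝ)) :
    Kproj f a X = fun x => f x • Pm n a (X x) :=
  funext fun x => Kproj_apply f a X x

lemma Kproj_contDiff {n : ℕ} {f : (Fin (n + n) → ℝ) → ℝ} (a : Fin n)
    {X : (Fin (n + n) → ℝ) → (Fin (n + n) → ℝ)}
    (hf : ContDiff ℝ (⊤ : ℕ∞) f) (hX : ContDiff ℝ (⊤ : ℕ∞) X) : ContDiff ℝ (⊤ : ℕ∞) (Kproj f a X) := by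
  rw [Kproj_eq]
  exact hf.smul ((Pm n a).contDiff.comp hX)

lemma fderiv_Kproj {n : ℕ} {f : (Fin (n + n) → ℝ) → ℝ} (a : Fin n)
    {X : (Fin (n + n) → ℝ) → (Fin (n + n) → ℝ)}
    (hf : ContDiff ℝ (⊤ : ℕ∞) f) (hX : ContDiff ℝ (⊤ : ℕ∞) X) (x : Fin (n + n) → ℝ) :
    fderiv ℝ (Kproj f a X) x
      = f x • (Pm n a).comp (fderiv ℝ X x) + (fderiv ℝ f x).smulRight (Pm n a (X x)) := by
  rw [Kproj_eq]
  have h1 : HasFDerivAt f (fderiv ℝ f x) x := (hf.differentiable (by simp) x).hasFDerivAt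
  have h2 : HasFDerivAt X (fderiv ℝ X x) x := (hX.differentiable (by simp) x).hasFDerivAt
  exact ((h1.smul ((Pm n a).hasFDerivAt.comp x h2))).fderiv

/-- The key pointwise formula: the Nijenhuis torsion of `Kproj f a` depends only on the
pointwise values of `X` and `Y`. -/
lemma nij_formula {n : ℕ} {f : (Fin (n + n) → ℝ) → ℝ} (a : Fin n)
    {X Y : (Fin (n + n) → ℝ) → (Fin (n + n) → ℝ)}
    (hf : ContDiff ℝ (⊤ : ℕ∞) f) (hX : ContDiff ℝ (⊤ : ℕ∞) X) (hY : ContDiff ℝ (⊤ : ℕ∞) Y)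
    (x : Fin (n + n) → ℝ) :
    nijT (Kproj f a) X Y x
      = (f x * (fderiv ℝ f x (Y x) - fderiv ℝ f x (Pm n a (Y x)))) • Pm n a (X x)
        - (f x * (fderiv ℝ f x (X x) - fderiv ℝ f x (Pm n a (X x)))) • Pm n a (Y x) := by
  simp only [nijT, lieB, Kproj_apply, fderiv_Kproj a hf hX, fderiv_Kproj a hf hY,
    ContinuousLinearMap.add_apply, ContinuousLinearMap.smulRight_apply,
    ContinuousLinearMap.comp_apply, ContinuousLinearMap.coe_smul', Pi.smul_apply,
    map_add, map_sub, map_smul, Pm_Pm, smul_eq_mul]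
  module

/-- For any smooth nonvanishing f, the Haantjes torsion of
K = f(q,p)(∂/∂q^a ⊗ dq^a + ∂/∂p_a ⊗ dp_a) vanishes identically. -/
theorem haantjes_torsion_projector_vanishes {n : ℕ} (a : Fin n)
    (f : (Fin (n + n) → ℝ) → ℝ) (hf : ContDiff ℝ (⊤ : ℕ∞) f) (hf0 : ∀ x, f x ≠ 0)
    (X Y : (Fin (n + n) → ℝ) → (Fin (n + n) → ℝ))
    (hX : ContDiff ℝ (⊤ : ℕ∞) X) (hY : ContDiff ℝ (⊤ : ℕ∞) Y) :
    ∀ x, haanT (Kproj f a) X Y x = 0 := by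
  intro x
  have hKX := Kproj_contDiff a hf hX
  have hKY := Kproj_contDiff a hf hY
  simp only [haanT, Kproj_apply, nij_formula a hf hX hY, nij_formula a hf hKX hKY,
    nij_formula a hf hX hKY, nij_formula a hf hKX hY, Kproj_apply,
    map_add, map_sub, map_smul, Pm_Pm, smul_eq_mul]
  module
end
end

section
/- For family (B) of new magnetic systems, the functions H = ν₁(x) p_x² + ψ₁(x) ν₂(y)² Π_y² + ψ₂(x) ν₃(z) p_z² + ν₄(x) − 1/(4ψ₁(x)), H₁ = ν₂(y)² (Π_y − 1/(2 ψ₁(x) ν₂(y)))², and H₂ = ν₃(z) p_z², with Π_y = p_y + 1/(2 ψ₁(x) ν₂(y)), pairwise Poisson-commute on the open set where ψ₁(x) ≠ 0 and ν₂(y) ≠ 0. -/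
noncomputable section

lemma pd_eq {F : (Fin 6 → ℝ) → ℝ} {L : (Fin 6 → ℝ) →L[ℝ] ℝ} {v : Fin 6 → ℝ}
    (h : HasFDerivAt F L v) (i : Fin 6) : pd F i v = L (Pi.single i 1) := by
  rw [pd, h.fderiv]

def prj (i : Fin 6) : (Fin 6 → ℝ) →L[ℝ] ℝ :=
  ContinuousLinearMap.proj (R := ℝ) (φ := fun _ : Fin 6 => ℝ) i

lemma proj_hasFDerivAt (i : Fin 6) (v : Fin 6 → ℝ) :
    HasFDerivAt (fun w : Fin 6 → ℝ => w i) (prj i) v :=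
  (prj i).hasFDerivAt

lemma comp_proj_hasFDerivAt (f : ℝ → ℝ) (hf : ContDiff ℝ (⊤ : ℕ∞) f) (i : Fin 6) (v : Fin 6 → ℝ) :
    HasFDerivAt (fun w : Fin 6 → ℝ => f (w i)) (deriv f (v i) • prj i) v :=
  ((hf.differentiable (by simp) (v i)).hasDerivAt).comp_hasFDerivAt v (proj_hasFDerivAt i v)

/-- Family (B) of new magnetic systems: with Π_y = p_y + 1/(2ψ₁(x)ν₂(y)), the functions
H, H₁, H₂ pairwise Poisson-commute (ψ₁ and ν₂ nonvanishing).  Canonical coordinates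
(x,y,z,p_x,p_y,p_z) = (v 0,…,v 5). -/
theorem new_magnetic_family_B_involution
    (ν₁ ν₄ ψ₁ ψ₂ ν₂ ν₃ : ℝ → ℝ)
    (hν₁ : ContDiff ℝ (⊤ : ℕ∞) ν₁) (hν₄ : ContDiff ℝ (⊤ : ℕ∞) ν₄)
    (hψ₁ : ContDiff ℝ (⊤ : ℕ∞) ψ₁) (hψ₁0 : ∀ x, ψ₁ x ≠ 0)
    (hψ₂ : ContDiff ℝ (⊤ : ℕ∞) ψ₂)
    (hν₂ : ContDiff ℝ (⊤ : ℕ∞) ν₂) (hν₂0 : ∀ y, ν₂ y ≠ 0)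
    (hν₃ : ContDiff ℝ (⊤ : ℕ∞) ν₃)
    (Py : (Fin 6 → ℝ) → ℝ)
    (hPy : Py = fun v => v 4 + 1 / (2 * ψ₁ (v 0) * ν₂ (v 1)))
    (H H₁ H₂ : (Fin 6 → ℝ) → ℝ)
    (hH : H = fun v => ν₁ (v 0) * (v 3)^2 + ψ₁ (v 0) * (ν₂ (v 1))^2 * (Py v)^2
      + ψ₂ (v 0) * ν₃ (v 2) * (v 5)^2 + ν₄ (v 0) - 1 / (4 * ψ₁ (v 0)))
    (hH₁ : H₁ = fun v => (ν₂ (v 1))^2 * (Py v - 1 / (2 * ψ₁ (v 0) * ν₂ (v 1)))^2)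
    (hH₂ : H₂ = fun v => ν₃ (v 2) * (v 5)^2) :
    ∀ v : Fin 6 → ℝ,
      pb H H₁ v = 0 ∧ pb H H₂ v = 0 ∧ pb H₁ H₂ v = 0 := by
  have EH : H = fun w => ν₁ (w 0) * (w 3 * w 3)
      + ψ₁ (w 0) * (ν₂ (w 1) * ν₂ (w 1)) * (w 4 * w 4)
      + ν₂ (w 1) * w 4 + ψ₂ (w 0) * ν₃ (w 2) * (w 5 * w 5) + ν₄ (w 0) := by
    subst hPy hH
    funext w
    have h1 := hψ₁0 (w 0)
    have h2 := hν₂0 (w 1)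
    field_simp
    ring
  have EH₁ : H₁ = fun w => ν₂ (w 1) * ν₂ (w 1) * (w 4 * w 4) := by
    subst hPy hH₁
    funext w
    have h1 := hψ₁0 (w 0)
    have h2 := hν₂0 (w 1)
    field_simp
    ring
  have EH₂ : H₂ = fun w => ν₃ (w 2) * (w 5 * w 5) := by
    subst hH₂; funext w; ring
  rw [EH, EH₁, EH₂]
  intro v
  have dH := (((((comp_proj_hasFDerivAt ν₁ hν₁ 0 v).fun_mul
        ((proj_hasFDerivAt 3 v).fun_mul (proj_hasFDerivAt 3 v))).fun_add
      (((comp_proj_hasFDerivAt ψ₁ hψ₁ 0 v).fun_mul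
        ((comp_proj_hasFDerivAt ν₂ hν₂ 1 v).fun_mul (comp_proj_hasFDerivAt ν₂ hν₂ 1 v))).fun_mul
        ((proj_hasFDerivAt 4 v).fun_mul (proj_hasFDerivAt 4 v)))).fun_add
      ((comp_proj_hasFDerivAt ν₂ hν₂ 1 v).fun_mul (proj_hasFDerivAt 4 v))).fun_add
      (((comp_proj_hasFDerivAt ψ₂ hψ₂ 0 v).fun_mul (comp_proj_hasFDerivAt ν₃ hν₃ 2 v)).fun_mul
        ((proj_hasFDerivAt 5 v).fun_mul (proj_hasFDerivAt 5 v)))).fun_add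
      (comp_proj_hasFDerivAt ν₄ hν₄ 0 v)
  have dH₁ := ((comp_proj_hasFDerivAt ν₂ hν₂ 1 v).fun_mul (comp_proj_hasFDerivAt ν₂ hν₂ 1 v)).fun_mul
      ((proj_hasFDerivAt 4 v).fun_mul (proj_hasFDerivAt 4 v))
  have dH₂ := (comp_proj_hasFDerivAt ν₃ hν₃ 2 v).fun_mul
      ((proj_hasFDerivAt 5 v).fun_mul (proj_hasFDerivAt 5 v))
  refine ⟨?_, ?_, ?_⟩ <;>
    rw [pb_expand] <;>
    simp only [pd_eq dH, pd_eq dH₁, pd_eq dH₂] <;>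
    simp [prj, Pi.single_apply] <;>
    ring
end
end
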